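/- arXiv:2208.07518 — 5 statements merged into one kernel-verified Lean document; each statement's English description precedes it below -/
import Mathlib

section
/- The unique optimal solution of the problem: minimize x₂² + |x₁ - x₂| subject to 2x₁ + x₂ ≥ 0 and x₁² + x₂² = 1, is x* = (√2/2, √2/2). -/
/-! On the unit circle `|a - b| * |a + b| = |a² - b²| = |1 - 2b²|`, and `|a + b| < 2` because
`(a + b)² ≤ 2 (a² + b²) = 2`. Hence `2 |a - b| > 1 - 2b²` whenever `a ≠ b`, so off the diagonal
the objective exceeds its value `1/2` at `x*`; and `x*` is the only feasible point on the diagonal. -/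

lemma abs_add_lt_two_of_sq_add_sq_eq_one {a b : ℝ} (h : a ^ 2 + b ^ 2 = 1) : |a + b| < 2 := by
  refine abs_lt_of_sq_lt_sq ?_ (by norm_num)
  nlinarith [sq_nonneg (a - b)]

lemma half_lt_sq_add_abs_sub {a b : ℝ} (h : a ^ 2 + b ^ 2 = 1) (hab : a ≠ b) :
    1 / 2 < b ^ 2 + |a - b| := by
  have hsub : 0 < |a - b| := abs_pos.mpr (sub_ne_zero.mpr hab)
  have hprod : 1 - 2 * b ^ 2 ≤ |a - b| * |a + b| := by
    rw [← abs_mul]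
    calc 1 - 2 * b ^ 2 = (a - b) * (a + b) := by linear_combination -h
      _ ≤ |(a - b) * (a + b)| := le_abs_self _
  have hlt : |a - b| * |a + b| < |a - b| * 2 :=
    mul_lt_mul_of_pos_left (abs_add_lt_two_of_sq_add_sq_eq_one h) hsub
  linarith

lemma eq_sqrt_two_div_two_of_two_mul_sq_eq_one {b : ℝ} (hb : 0 ≤ b) (h : 2 * b ^ 2 = 1) :
    b = Real.sqrt 2 / 2 := by
  have hs : Real.sqrt 2 ^ 2 = 2 := Real.sq_sqrt (by norm_num)
  nlinarith [Real.sqrt_nonneg 2, sq_nonneg (b - Real.sqrt 2 / 2)]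

/-- The unique optimal solution of: minimize `x₂² + |x₁ - x₂|` subject to
`2x₁ + x₂ ≥ 0` and `x₁² + x₂² = 1`, is `x* = (√2/2, √2/2)`. -/
theorem stmt_0 :
    let f : ℝ × ℝ → ℝ := fun x => x.2 ^ 2 + |x.1 - x.2|
    let feasible : ℝ × ℝ → Prop := fun x => 2 * x.1 + x.2 ≥ 0 ∧ x.1 ^ 2 + x.2 ^ 2 = 1
    let xstar : ℝ × ℝ := (Real.sqrt 2 / 2, Real.sqrt 2 / 2)
    feasible xstar ∧ ∀ x : ℝ × ℝ, feasible x → x ≠ xstar → f xstar < f x := by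
  intro f feasible xstar
  have hsq : (Real.sqrt 2 / 2) ^ 2 = 1 / 2 := by
    rw [div_pow, Real.sq_sqrt (by norm_num)]; norm_num
  refine ⟨⟨by positivity, by rw [hsq]; norm_num⟩, ?_⟩
  rintro ⟨a, b⟩ ⟨hcone, hcirc⟩ hne
  have hab : a ≠ b := by
    rintro rfl
    have hb : a = Real.sqrt 2 / 2 :=
      eq_sqrt_two_div_two_of_two_mul_sq_eq_one (by linarith) (by linarith)
    exact hne (by rw [hb])
  show (Real.sqrt 2 / 2) ^ 2 + |Real.sqrt 2 / 2 - Real.sqrt 2 / 2| < b ^ 2 + |a - b|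
  rw [hsq, sub_self, abs_zero, add_zero]
  exact half_lt_sq_add_abs_sub hcirc hab
end

section
/- Let θ(x) = μ‖x‖₁ on ℝⁿ, x ∈ ℝⁿ, and ξ ∈ ℝⁿ. The lower second order epiderivative satisfies θ⁻↓↓(x; ξ, w) = μ·(Σ_{i: x_i=0, ξ_i=0} |w_i| + Σ_{i: x_i>0 or (x_i=0, ξ_i>0)} w_i − Σ_{i: x_i<0 or (x_i=0, ξ_i<0)} w_i). -/
/-!
Coordinatewise, for `t > 0` small and `w'` near `w`, the sign of `x_i + t ξ_i + (t²/2) w'_i` is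
that of `x_i`, or of `ξ_i` when `x_i = 0`; when both vanish the term is `(t²/2) w'_i`. So on a
neighbourhood the difference quotient is *equal* to `μ · Σ_i g_i(w'_i)` with `g_i` one of `|·|`,
`id`, `-id`, which is continuous in `w'`, and the liminf is an honest limit.
-/

open Filter Finset Topology

noncomputable def absDirDeriv (a b : ℝ) : ℝ :=
  if a = 0 then |b| else if 0 < a then b else -b

noncomputable def absSecondEpideriv (a b c : ℝ) : ℝ :=
  if a = 0 ∧ b = 0 then |c| else if 0 < a ∨ (a = 0 ∧ 0 < b) then c else -c

noncomputable def absSecondQuotient (a b t c : ℝ) : ℝ :=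
  (|a + t * b + t ^ 2 / 2 * c| - |a| - t * absDirDeriv a b) / (t ^ 2 / 2)

@[fun_prop]
theorem continuous_absSecondEpideriv (a b : ℝ) : Continuous (absSecondEpideriv a b) := by
  unfold absSecondEpideriv
  split_ifs <;> fun_prop

theorem eventually_pos_nhdsGT_prod_nhds {X : Type*} [TopologicalSpace X] {f : ℝ × X → ℝ}
    (hf : Continuous f) {c : X} (h : 0 < f (0, c)) :
    ∀ᶠ p in 𝓝[>] 0 ×ˢ 𝓝 c, 0 < f p :=
  ((hf.tendsto (0, c)).eventually (lt_mem_nhds h)).filter_mono <| by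
    rw [nhds_prod_eq]; exact prod_mono nhdsWithin_le_nhds le_rfl

theorem eventually_absSecondQuotient_eq_of_ne_zero {a : ℝ} (ha : a ≠ 0) (b c : ℝ) :
    ∀ᶠ p : ℝ × ℝ in 𝓝[>] 0 ×ˢ 𝓝 c,
      absSecondQuotient a b p.1 p.2 = absSecondEpideriv a b p.2 := by
  have hpos : ∀ᶠ p : ℝ × ℝ in 𝓝[>] 0 ×ˢ 𝓝 c, 0 < p.1 :=
    tendsto_fst.eventually self_mem_nhdsWithin
  rcases ha.lt_or_gt with ha | ha
  · filter_upwards [hpos, eventually_pos_nhdsGT_prod_nhds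
      (f := fun p => -(a + p.1 * b + p.1 ^ 2 / 2 * p.2)) (by fun_prop) (by simpa using ha)]
      with ⟨t, c⟩ ht hy
    simp only [absSecondQuotient, absDirDeriv, absSecondEpideriv, ha.ne, ha.not_gt, false_and,
      or_self, if_false]
    rw [abs_of_neg (neg_pos.1 hy), abs_of_neg ha]
    field_simp
    ring
  · filter_upwards [hpos, eventually_pos_nhdsGT_prod_nhds
      (f := fun p => a + p.1 * b + p.1 ^ 2 / 2 * p.2) (by fun_prop) (by simpa using ha)]
      with ⟨t, c⟩ ht hy
    simp only [absSecondQuotient, absDirDeriv, absSecondEpideriv, ha.ne', ha, false_and,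
      true_or, if_true, if_false]
    rw [abs_of_pos hy, abs_of_pos ha]
    field_simp
    ring

theorem eventually_absSecondQuotient_zero_eq (b c : ℝ) :
    ∀ᶠ p : ℝ × ℝ in 𝓝[>] 0 ×ˢ 𝓝 c,
      absSecondQuotient 0 b p.1 p.2 = absSecondEpideriv 0 b p.2 := by
  have hpos : ∀ᶠ p : ℝ × ℝ in 𝓝[>] 0 ×ˢ 𝓝 c, 0 < p.1 :=
    tendsto_fst.eventually self_mem_nhdsWithin
  rcases lt_trichotomy b 0 with hb | rfl | hb
  · filter_upwards [hpos, eventually_pos_nhdsGT_prod_nhds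
      (f := fun p => -(b + p.1 / 2 * p.2)) (by fun_prop) (by simpa using hb)]
      with ⟨t, c⟩ ht hy
    have hy' : 0 + t * b + t ^ 2 / 2 * c < 0 := by nlinarith
    simp only [absSecondQuotient, absDirDeriv, absSecondEpideriv, hb.ne, hb.not_gt, and_false,
      or_false, lt_irrefl, if_true, if_false]
    rw [abs_of_neg hy', abs_of_neg hb, abs_zero]
    field_simp
    ring
  · filter_upwards [hpos] with ⟨t, c⟩ ht
    simp only [absSecondQuotient, absDirDeriv, absSecondEpideriv, and_self, if_true]
    rw [show 0 + t * 0 + t ^ 2 / 2 * c = t ^ 2 / 2 * c by ring, abs_mul,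
      abs_of_pos (by positivity : 0 < t ^ 2 / 2), abs_zero]
    field_simp
    ring
  · filter_upwards [hpos, eventually_pos_nhdsGT_prod_nhds
      (f := fun p => b + p.1 / 2 * p.2) (by fun_prop) (by simpa using hb)]
      with ⟨t, c⟩ ht hy
    have hy' : 0 < 0 + t * b + t ^ 2 / 2 * c := by nlinarith
    simp only [absSecondQuotient, absDirDeriv, absSecondEpideriv, hb.ne', hb, and_false,
      and_true, or_true, if_true, if_false]
    rw [abs_of_pos hy', abs_of_pos hb, abs_zero]
    field_simp
    ring

theorem eventually_absSecondQuotient_eq (a b c : ℝ) :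
    ∀ᶠ p : ℝ × ℝ in 𝓝[>] 0 ×ˢ 𝓝 c,
      absSecondQuotient a b p.1 p.2 = absSecondEpideriv a b p.2 := by
  rcases eq_or_ne a 0 with rfl | ha
  exacts [eventually_absSecondQuotient_zero_eq b c,
    eventually_absSecondQuotient_eq_of_ne_zero ha b c]

theorem sum_filter_eq_sum_absDirDeriv {ι : Type*} (s : Finset ι) (x ξ : ι → ℝ) :
    (∑ i ∈ s.filter (fun i => x i = 0), |ξ i|) + (∑ i ∈ s.filter (fun i => 0 < x i), ξ i)
      - (∑ i ∈ s.filter (fun i => x i < 0), ξ i) = ∑ i ∈ s, absDirDeriv (x i) (ξ i) := by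
  simp only [sum_filter, ← sum_add_distrib, ← sum_sub_distrib]
  refine sum_congr rfl fun i _ => ?_
  rcases lt_trichotomy (x i) 0 with h | h | h
  · simp [absDirDeriv, h, h.ne, h.not_gt]
  · simp [absDirDeriv, h]
  · simp [absDirDeriv, h, h.ne', h.not_gt]

theorem sum_filter_eq_sum_absSecondEpideriv {ι : Type*} (s : Finset ι) (x ξ w : ι → ℝ) :
    (∑ i ∈ s.filter (fun i => x i = 0 ∧ ξ i = 0), |w i|)
        + (∑ i ∈ s.filter (fun i => 0 < x i ∨ (x i = 0 ∧ 0 < ξ i)), w i)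
        - (∑ i ∈ s.filter (fun i => x i < 0 ∨ (x i = 0 ∧ ξ i < 0)), w i)
      = ∑ i ∈ s, absSecondEpideriv (x i) (ξ i) (w i) := by
  simp only [sum_filter, ← sum_add_distrib, ← sum_sub_distrib]
  refine sum_congr rfl fun i _ => ?_
  rcases lt_trichotomy (x i) 0 with h | h | h
  · simp [absSecondEpideriv, h, h.ne, h.not_gt]
  · rcases lt_trichotomy (ξ i) 0 with h' | h' | h'
    · simp [absSecondEpideriv, h, h', h'.ne, h'.not_gt]
    · simp [absSecondEpideriv, h, h']
    · simp [absSecondEpideriv, h, h', h'.ne', h'.not_gt]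
  · simp [absSecondEpideriv, h, h.ne', h.not_gt]

theorem mul_sum_absSecondQuotient {ι : Type*} (s : Finset ι) (μ t : ℝ) (x ξ c : ι → ℝ) :
    μ * ∑ i ∈ s, absSecondQuotient (x i) (ξ i) t (c i)
      = ((μ * ∑ i ∈ s, |x i + t * ξ i + t ^ 2 / 2 * c i|) - μ * ∑ i ∈ s, |x i|
          - t * (μ * ∑ i ∈ s, absDirDeriv (x i) (ξ i))) / (t ^ 2 / 2) := by
  simp only [absSecondQuotient, ← sum_div, sum_sub_distrib, ← mul_sum]
  ring

theorem stmt_7_general (n : ℕ) (μ : ℝ) (x ξ w : Fin n → ℝ) :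
    Filter.liminf
      (fun p : ℝ × (Fin n → ℝ) =>
        ((μ * ∑ i, |x i + p.1 * ξ i + p.1 ^ 2 / 2 * p.2 i|)
          - μ * ∑ i, |x i|
          - p.1 * (μ * ((∑ i ∈ univ.filter (fun i => x i = 0), |ξ i|)
              + (∑ i ∈ univ.filter (fun i => 0 < x i), ξ i)
              - (∑ i ∈ univ.filter (fun i => x i < 0), ξ i)))) / (p.1 ^ 2 / 2))
      ((nhdsWithin 0 (Set.Ioi 0)) ×ˢ nhds w)
    = μ * ((∑ i ∈ univ.filter (fun i => x i = 0 ∧ ξ i = 0), |w i|)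
        + (∑ i ∈ univ.filter (fun i => 0 < x i ∨ (x i = 0 ∧ 0 < ξ i)), w i)
        - (∑ i ∈ univ.filter (fun i => x i < 0 ∨ (x i = 0 ∧ ξ i < 0)), w i)) := by
  rw [sum_filter_eq_sum_absDirDeriv, sum_filter_eq_sum_absSecondEpideriv]
  simp_rw [← mul_sum_absSecondQuotient]
  have hcoord (i : Fin n) : ∀ᶠ p : ℝ × (Fin n → ℝ) in 𝓝[>] 0 ×ˢ 𝓝 w,
      absSecondQuotient (x i) (ξ i) p.1 (p.2 i) = absSecondEpideriv (x i) (ξ i) (p.2 i) :=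
    (tendsto_id.prodMap ((continuous_apply i).tendsto w)).eventually
      (eventually_absSecondQuotient_eq _ _ _)
  have hlim : Tendsto (fun p : ℝ × (Fin n → ℝ) => μ * ∑ i, absSecondEpideriv (x i) (ξ i) (p.2 i))
      (𝓝[>] 0 ×ˢ 𝓝 w) (𝓝 (μ * ∑ i, absSecondEpideriv (x i) (ξ i) (w i))) :=
    ((show Continuous fun v : Fin n → ℝ => μ * ∑ i, absSecondEpideriv (x i) (ξ i) (v i) by
      fun_prop).tendsto w).comp tendsto_snd
  refine (hlim.congr' ?_).liminf_eq
  filter_upwards [eventually_all.2 hcoord] with p hp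
  simp only [hp]

/-- For `θ(x) = μ‖x‖₁` on `ℝⁿ`, the lower second order epiderivative
`θ⁻↓↓(x; ξ, w) = liminf_{t↓0, w'→w} [θ(x + tξ + (t²/2)w') − θ(x) − t·θ'(x;ξ)]/(t²/2)`
equals
`μ·(Σ_{x_i=0, ξ_i=0} |w_i| + Σ_{x_i>0 ∨ (x_i=0, ξ_i>0)} w_i − Σ_{x_i<0 ∨ (x_i=0, ξ_i<0)} w_i)`,
where `θ'(x;ξ) = μ·(Σ_{x_i=0} |ξ_i| + Σ_{x_i>0} ξ_i − Σ_{x_i<0} ξ_i)`. -/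
theorem stmt_7 (n : ℕ) (μ : ℝ) (hμ : 0 < μ) (x ξ w : Fin n → ℝ) :
    Filter.liminf
      (fun p : ℝ × (Fin n → ℝ) =>
        ((μ * ∑ i, |x i + p.1 * ξ i + p.1 ^ 2 / 2 * p.2 i|)
          - μ * ∑ i, |x i|
          - p.1 * (μ * ((∑ i ∈ univ.filter (fun i => x i = 0), |ξ i|)
              + (∑ i ∈ univ.filter (fun i => 0 < x i), ξ i)
              - (∑ i ∈ univ.filter (fun i => x i < 0), ξ i)))) / (p.1 ^ 2 / 2))
      ((nhdsWithin 0 (Set.Ioi 0)) ×ˢ nhds w)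
    = μ * ((∑ i ∈ univ.filter (fun i => x i = 0 ∧ ξ i = 0), |w i|)
        + (∑ i ∈ univ.filter (fun i => 0 < x i ∨ (x i = 0 ∧ 0 < ξ i)), w i)
        - (∑ i ∈ univ.filter (fun i => x i < 0 ∨ (x i = 0 ∧ ξ i < 0)), w i)) :=
  stmt_7_general n μ x ξ w
end

section
/- Let x* ∈ S^{n-1} and y* a multiplier satisfying y* ∈ μ∂‖x*‖₁ and Π_{x*}(∇f(x*)+y*) = 0. Then every element d of the normal space N_{x*}S^{n-1} = {a·x* : a ∈ ℝ} satisfies θ'(x*; d) = ⟨d, y*⟩, where θ = μ‖·‖₁; consequently T_{x*}S^{n-1} + C_{θ}(x*, y*) = ℝⁿ, where C_θ(x*,y*) = {d : θ'(x*; d) = ⟨d, y*⟩}. -/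
open Filter Finset Topology

/-!
On the normal line `d = a • x*` the `ℓ₁` difference quotient is exactly constant for small
`t > 0`: `|x*ᵢ + t a x*ᵢ| = (1 + t a) |x*ᵢ|` once `1 + t a > 0`, so `θ'(x*; a x*) = μ a ‖x*‖₁`.
The subgradient condition gives `x*ᵢ y*ᵢ = μ |x*ᵢ|` coordinatewise, hence `⟨a x*, y*⟩ = μ a ‖x*‖₁`
as well. Any `z` then splits as its tangential part `z - ⟨x*, z⟩ x*` plus the normal part
`⟨x*, z⟩ x*`.
-/

lemma mul_eq_mul_abs_of_subgradient {x y μ : ℝ} (hpos : 0 < x → y = μ) (hneg : x < 0 → y = -μ) :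
    x * y = μ * |x| := by
  rcases lt_trichotomy x 0 with h | rfl | h
  · rw [hneg h, abs_of_neg h]; ring
  · simp
  · rw [hpos h, abs_of_pos h]; ring

lemma eventually_nhdsGT_zero_one_add_mul_pos (a : ℝ) : ∀ᶠ t in 𝓝[>] (0 : ℝ), 0 < 1 + t * a := by
  have hcont : Tendsto (fun t : ℝ => 1 + t * a) (𝓝 0) (𝓝 1) := by
    simpa using ((continuous_mul_const a).const_add 1).tendsto (0 : ℝ)
  exact nhdsWithin_le_nhds (hcont.eventually (lt_mem_nhds one_pos))

lemma tendsto_l1_diffQuotient_smul_self {ι : Type*} [Fintype ι] (μ a : ℝ) (x : ι → ℝ) :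
    Tendsto (fun t : ℝ => ((μ * ∑ i, |x i + t * (a * x i)|) - μ * ∑ i, |x i|) / t)
      (𝓝[>] 0) (𝓝 (μ * a * ∑ i, |x i|)) := by
  refine tendsto_const_nhds.congr' ?_
  filter_upwards [eventually_nhdsGT_zero_one_add_mul_pos a, self_mem_nhdsWithin]
    with t hpos (ht : 0 < t)
  have habs : ∀ i, |x i + t * (a * x i)| = (1 + t * a) * |x i| := fun i => by
    rw [show x i + t * (a * x i) = (1 + t * a) * x i by ring, abs_mul, abs_of_pos hpos]
  simp only [habs, ← Finset.mul_sum]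
  field_simp
  ring

lemma sum_mul_sub_sum_mul_smul_eq_zero {ι : Type*} [Fintype ι] {x : ι → ℝ}
    (hx : ∑ i, x i ^ 2 = 1) (z : ι → ℝ) :
    ∑ i, x i * (z i - (∑ j, x j * z j) * x i) = 0 := by
  calc ∑ i, x i * (z i - (∑ j, x j * z j) * x i)
      = (∑ i, x i * z i) - (∑ j, x j * z j) * ∑ i, x i ^ 2 := by
        rw [Finset.mul_sum, ← Finset.sum_sub_distrib]
        exact Finset.sum_congr rfl fun i _ => by ring
    _ = 0 := by rw [hx]; ring

theorem stmt_9_general (n : ℕ) (μ : ℝ) (xstar ystar : Fin n → ℝ)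
    (hx : ∑ i, xstar i ^ 2 = 1)
    (hsub : ∀ i, (0 < xstar i → ystar i = μ) ∧ (xstar i < 0 → ystar i = -μ) ∧
      (xstar i = 0 → |ystar i| ≤ μ)) :
    -- critical cone of θ = μ‖·‖₁: directions where the one-sided directional
    -- derivative of θ at x* equals ⟨d, y*⟩
    let C : Set (Fin n → ℝ) := {d | Tendsto
      (fun t : ℝ => ((μ * ∑ i, |xstar i + t * d i|) - μ * ∑ i, |xstar i|) / t)
      (nhdsWithin 0 (Set.Ioi 0)) (nhds (∑ i, d i * ystar i))}
    (∀ a : ℝ, (fun i => a * xstar i) ∈ C) ∧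
      (∀ z : Fin n → ℝ, ∃ ξ d : Fin n → ℝ,
        (∑ i, xstar i * ξ i) = 0 ∧ d ∈ C ∧ z = ξ + d) := by
  intro C
  have hnormal : ∀ a : ℝ, (fun i => a * xstar i) ∈ C := fun a => by
    have hinner : ∑ i, a * xstar i * ystar i = μ * a * ∑ i, |xstar i| := by
      rw [Finset.mul_sum]
      refine Finset.sum_congr rfl fun i _ => ?_
      rw [mul_assoc, mul_eq_mul_abs_of_subgradient (hsub i).1 (hsub i).2.1]
      ring
    show Tendsto _ _ (𝓝 (∑ i, a * xstar i * ystar i))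
    rw [hinner]
    exact tendsto_l1_diffQuotient_smul_self μ a xstar
  refine ⟨hnormal, fun z => ⟨_, _, sum_mul_sub_sum_mul_smul_eq_zero hx z,
    hnormal (∑ j, xstar j * z j), ?_⟩⟩
  funext i
  simp

/-- Let `x* ∈ S^{n-1}` and `y*` a multiplier with `y* ∈ μ∂‖x*‖₁` and
`Π_{x*}(∇f(x*) + y*) = 0`. Then every `d = a·x*` in the normal space satisfies
`θ'(x*; d) = ⟨d, y*⟩` (with `θ = μ‖·‖₁`), and consequently
`T_{x*}S^{n-1} + C_θ(x*, y*) = ℝⁿ`, where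
`C_θ(x*,y*) = {d : θ'(x*; d) = ⟨d, y*⟩}`. -/
theorem stmt_9 (n : ℕ) (μ : ℝ) (hμ : 0 < μ) (xstar g ystar : Fin n → ℝ)
    (hx : ∑ i, xstar i ^ 2 = 1)
    (hsub : ∀ i, (0 < xstar i → ystar i = μ) ∧ (xstar i < 0 → ystar i = -μ) ∧
      (xstar i = 0 → |ystar i| ≤ μ))
    (hstat : ∀ i, (g i + ystar i) - (∑ j, xstar j * (g j + ystar j)) * xstar i = 0) :
    -- critical cone of θ = μ‖·‖₁: directions where the one-sided directional
    -- derivative of θ at x* equals ⟨d, y*⟩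
    let C : Set (Fin n → ℝ) := {d | Tendsto
      (fun t : ℝ => ((μ * ∑ i, |xstar i + t * d i|) - μ * ∑ i, |xstar i|) / t)
      (nhdsWithin 0 (Set.Ioi 0)) (nhds (∑ i, d i * ystar i))}
    (∀ a : ℝ, (fun i => a * xstar i) ∈ C) ∧
      (∀ z : Fin n → ℝ, ∃ ξ d : Fin n → ℝ,
        (∑ i, xstar i * ξ i) = 0 ∧ d ∈ C ∧ z = ξ + d) :=
  stmt_9_general n μ xstar ystar hx hsub
end

section
/- Let g₂ : M → Z be a map, x* a point, and suppose for every multiplier pair: whenever Dg₂(x*)*λ = 0 and λ ∈ R_{N_Q(g₂(x*))}(y*) imply λ = 0, then the set of Lagrange multipliers M(x*) = {y ∈ N_Q(g₂(x*)) : grad f(x*) + Dg₂(x*)*y = 0} containing y* is a singleton: M(x*) = {y*}. Conversely, if M(x*) = {y*}, then [Dg₂(x*)T_{x*}M]^⊥ ∩ R_{N_Q(g₂(x*))}(y*) = {0}. -/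
/-!
A multiplier `y` differs from `y*` by a vector `y - y*` in the kernel of `A*`, and convexity of
the normal cone puts `y - y*` in its radial cone at `y*`; so the condition on `λ` forces `y = y*`.
Conversely, a nonzero `λ ∈ ker A*` in the radial cone at `y*` yields the second multiplier
`y* + t • λ` for some `t > 0`.
-/

open Set

section RadialCone

variable (𝕜 : Type*) {E W : Type*} [Field 𝕜] [LinearOrder 𝕜] [IsStrictOrderedRing 𝕜]
  [AddCommGroup E] [Module 𝕜 E] [AddCommGroup W] [Module 𝕜 W]

def radialCone (N : Set E) (y : E) : Set E :=
  {d | ∃ t₀ > (0 : 𝕜), ∀ t ∈ Icc 0 t₀, y + t • d ∈ N}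

variable {𝕜} {N : Set E} {x y : E}

theorem zero_mem_radialCone (hy : y ∈ N) : (0 : E) ∈ radialCone 𝕜 N y :=
  ⟨1, one_pos, fun t _ => by simpa using hy⟩

theorem Convex.sub_mem_radialCone (hN : Convex 𝕜 N) (hx : x ∈ N) (hy : y ∈ N) :
    y - x ∈ radialCone 𝕜 N x :=
  ⟨1, one_pos, fun _ ht => hN.add_smul_sub_mem hx hy ht⟩

variable {B : E →ₗ[𝕜] W} {c : W}

theorem eq_singleton_of_ker_inter_radialCone_trivial (hN : Convex 𝕜 N) (hy : y ∈ N)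
    (hyB : c + B y = 0) (h : ∀ d, B d = 0 → d ∈ radialCone 𝕜 N y → d = 0) :
    {z ∈ N | c + B z = 0} = {y} := by
  refine eq_singleton_iff_unique_mem.mpr ⟨⟨hy, hyB⟩, fun z ⟨hz, hzB⟩ => ?_⟩
  have hker : B (z - y) = 0 := by
    rw [map_sub, add_left_cancel (hzB.trans hyB.symm), sub_self]
  exact sub_eq_zero.mp (h _ hker (hN.sub_mem_radialCone hy hz))

theorem ker_inter_radialCone_eq_zero_of_eq_singleton (hy : y ∈ N) (hyB : c + B y = 0)
    (h : {z ∈ N | c + B z = 0} = {y}) :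
    {d | B d = 0} ∩ radialCone 𝕜 N y = {0} := by
  refine eq_singleton_iff_unique_mem.mpr ⟨⟨map_zero B, zero_mem_radialCone hy⟩, ?_⟩
  rintro d ⟨hdB, t, ht, hmem⟩
  have hfiber : y + t • d ∈ {z ∈ N | c + B z = 0} :=
    ⟨hmem t ⟨ht.le, le_rfl⟩, by rw [map_add, map_smul, hdB, smul_zero, add_zero, hyB]⟩
  rw [h, mem_singleton_iff, add_eq_left, smul_eq_zero] at hfiber
  exact hfiber.resolve_left ht.ne'

end RadialCone

theorem convex_setOf_forall_inner_sub_nonpos {Z : Type*} [NormedAddCommGroup Z]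
    [InnerProductSpace ℝ Z] (Q : Set Z) (q : Z) :
    Convex ℝ {z : Z | ∀ x ∈ Q, inner ℝ z (x - q) ≤ (0 : ℝ)} := by
  simp only [ofPred_forall]
  exact convex_iInter₂ fun x _ => convex_halfSpace_le ((innerₗ Z).flip (x - q)).isLinear 0

theorem stmt_13_general {V Z : Type*}
    [NormedAddCommGroup V] [InnerProductSpace ℝ V] [FiniteDimensional ℝ V]
    [NormedAddCommGroup Z] [InnerProductSpace ℝ Z] [FiniteDimensional ℝ Z]
    (A : V →ₗ[ℝ] Z) (G : V) (Q : Set Z) (q : Z)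
    (N : Set Z) (hN : N = {z : Z | ∀ x ∈ Q, inner ℝ z (x - q) ≤ (0 : ℝ)})
    (ystar : Z)
    (M : Set Z) (hM : M = {y ∈ N | G + LinearMap.adjoint A y = 0})
    (hystar : ystar ∈ M)
    (R : Set Z)
    (hR : R = {d : Z | ∃ tstar > (0 : ℝ), ∀ t ∈ Set.Icc 0 tstar,
      ystar + t • d ∈ N}) :
    ((∀ lam : Z, LinearMap.adjoint A lam = 0 → lam ∈ R → lam = 0) → M = {ystar}) ∧
    (M = {ystar} →
      {lam : Z | LinearMap.adjoint A lam = 0} ∩ R = {0}) := by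
  subst hM hR
  obtain ⟨hyN, hyA⟩ := hystar
  have hNconv : Convex ℝ N := hN ▸ convex_setOf_forall_inner_sub_nonpos Q q
  exact ⟨eq_singleton_of_ker_inter_radialCone_trivial hNconv hyN hyA,
    ker_inter_radialCone_eq_zero_of_eq_singleton hyN hyA⟩

/-- Uniqueness of Lagrange multipliers (Proposition 3.2, linear-algebraic form).
With `V` modeling the tangent space `T_{x*}M`, `A = Dg₂(x*) : V → Z`,
`G = grad f(x*)`, `q = g₂(x*) ∈ Q`, `N = N_Q(q)` the normal cone,
`R = R_N(y*)` the radial cone of `N` at `y*`, and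
`M(x*) = {y ∈ N : G + A*y = 0}`:
if every `λ` with `A*λ = 0` and `λ ∈ R` is zero, then `M(x*) = {y*}`;
conversely, if `M(x*) = {y*}` then `ker A* ∩ R = {0}`. -/
theorem stmt_13 {V Z : Type*}
    [NormedAddCommGroup V] [InnerProductSpace ℝ V] [FiniteDimensional ℝ V]
    [NormedAddCommGroup Z] [InnerProductSpace ℝ Z] [FiniteDimensional ℝ Z]
    (A : V →ₗ[ℝ] Z) (G : V) (Q : Set Z) (hQne : Q.Nonempty) (hQcl : IsClosed Q)
    (hQconv : Convex ℝ Q) (q : Z) (hq : q ∈ Q)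
    (N : Set Z) (hN : N = {z : Z | ∀ x ∈ Q, inner ℝ z (x - q) ≤ (0 : ℝ)})
    (ystar : Z)
    (M : Set Z) (hM : M = {y ∈ N | G + LinearMap.adjoint A y = 0})
    (hystar : ystar ∈ M)
    (R : Set Z)
    (hR : R = {d : Z | ∃ tstar > (0 : ℝ), ∀ t ∈ Set.Icc 0 tstar,
      ystar + t • d ∈ N}) :
    ((∀ lam : Z, LinearMap.adjoint A lam = 0 → lam ∈ R → lam = 0) → M = {ystar}) ∧
    (M = {ystar} →
      {lam : Z | LinearMap.adjoint A lam = 0} ∩ R = {0}) :=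
  stmt_13_general A G Q q N hN ystar M hM hystar R hR
end

section
/- Let M = {x ∈ 𝕏 : h(x) = 0} where h : 𝕏 → ℝ^m is smooth with h'(x) surjective for all x ∈ M, so T_xM = ker h'(x). Then for a feasible point x (i.e., g(x) ∈ K), the manifold Robinson CQ g'(x)(ker h'(x)) + T_K(g(x)) = Y holds if and only if the Euclidean Robinson CQ holds: for all (d₁, d₂) ∈ Y × ℝ^m there exist ξ ∈ 𝕏 and η ∈ T_K(g(x)) with g'(x)ξ + η = d₁ and h'(x)ξ = d₂. -/
open Set

section

variable {R X Y Z : Type*} [Ring R] [AddCommGroup X] [Module R X] [AddCommGroup Y] [Module R Y]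
  [AddCommGroup Z] [Module R Z]

/-- Surjectivity of `B` lets one lift any `d₂` to some `ξ₀`; the remaining freedom is
exactly `ker B`. -/
theorem LinearMap.setOf_ker_add_eq_univ_iff {A : X →ₗ[R] Y} {B : X →ₗ[R] Z}
    (hB : Function.Surjective B) (T : Set Y) :
    {v : Y | ∃ ξ ∈ LinearMap.ker B, ∃ η ∈ T, v = A ξ + η} = univ ↔
      ∀ (d₁ : Y) (d₂ : Z), ∃ (ξ : X) (η : Y), η ∈ T ∧ A ξ + η = d₁ ∧ B ξ = d₂ := by
  simp only [eq_univ_iff_forall, mem_ofPred_eq, LinearMap.mem_ker]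
  constructor
  · intro h d₁ d₂
    obtain ⟨ξ₀, rfl⟩ := hB d₂
    obtain ⟨ξ, hξ, η, hη, hsplit⟩ := h (d₁ - A ξ₀)
    refine ⟨ξ + ξ₀, η, hη, ?_, by rw [map_add, hξ, zero_add]⟩
    rw [map_add, add_right_comm, ← hsplit, sub_add_cancel]
  · intro h v
    obtain ⟨ξ, η, hη, hsplit, hξ⟩ := h v 0
    exact ⟨ξ, hξ, η, hη, hsplit.symm⟩

end

theorem stmt_15_general {X Y : Type*} (m : ℕ)
    [NormedAddCommGroup X] [InnerProductSpace ℝ X]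
    [NormedAddCommGroup Y] [InnerProductSpace ℝ Y]
    (A : X →ₗ[ℝ] Y) (B : X →ₗ[ℝ] EuclideanSpace ℝ (Fin m))
    (hB : Function.Surjective B)
    (TK : Set Y) :
    ({v : Y | ∃ ξ ∈ LinearMap.ker B, ∃ η ∈ TK, v = A ξ + η} = Set.univ) ↔
      (∀ (d₁ : Y) (d₂ : EuclideanSpace ℝ (Fin m)),
        ∃ (ξ : X) (η : Y), η ∈ TK ∧ A ξ + η = d₁ ∧ B ξ = d₂) :=
  LinearMap.setOf_ker_add_eq_univ_iff hB TK

/-- Let `M = {x : h(x) = 0}` with `h'(x)` surjective, so `T_xM = ker h'(x)`.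
Writing `A = g'(x)`, `B = h'(x)`, and `TK = T_K(g(x))` (the tangent cone to the
closed convex set `K` at the feasible value `gx ∈ K`), the manifold Robinson CQ
`A(ker B) + TK = Y` holds iff the Euclidean Robinson CQ holds: for all
`(d₁, d₂)` there exist `ξ` and `η ∈ TK` with `Aξ + η = d₁` and `Bξ = d₂`. -/
theorem stmt_15 {X Y : Type*} (m : ℕ)
    [NormedAddCommGroup X] [InnerProductSpace ℝ X] [FiniteDimensional ℝ X]
    [NormedAddCommGroup Y] [InnerProductSpace ℝ Y] [FiniteDimensional ℝ Y]
    (A : X →ₗ[ℝ] Y) (B : X →ₗ[ℝ] EuclideanSpace ℝ (Fin m))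
    (hB : Function.Surjective B)
    (K : Set Y) (hKcl : IsClosed K) (hKconv : Convex ℝ K)
    (gx : Y) (hgx : gx ∈ K)
    (TK : Set Y) (hTK : TK = closure {d : Y | ∃ t > (0 : ℝ), gx + t • d ∈ K}) :
    ({v : Y | ∃ ξ ∈ LinearMap.ker B, ∃ η ∈ TK, v = A ξ + η} = Set.univ) ↔
      (∀ (d₁ : Y) (d₂ : EuclideanSpace ℝ (Fin m)),
        ∃ (ξ : X) (η : Y), η ∈ TK ∧ A ξ + η = d₁ ∧ B ξ = d₂) :=
  stmt_15_general m A B hB TK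
end
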